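/- The transportation proof rule is sound in an abstract sequent semantics: suppose a sequent is valid iff all its closed instances are valid, a closed instance of the conclusion Π Γ:𝒞'. F is valid iff F[G'/Γ] is valid for every instance G' of 𝒞', and instances G' split into well-formed ones (covered via schema subsumption by instances of 𝒞 with equivalent validity) and ill-formed ones (for which F[G'/Γ] is valid by the structural condition). Then validity of the premise sequent Π Γ:𝒞. F entails validity of the conclusion sequent Π Γ:𝒞'. F. -/
import Mathlib

theorem transportation_rule_sound {I CtxExpr : Type*}
    (Valid_prem Valid_conc : I → Prop)
    (CtxInstC CtxInstC' : CtxExpr → Prop) (wf : CtxExpr → Prop)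
    (V : I → CtxExpr → Prop)
    (H1 : ∀ i, Valid_prem i ↔ ∀ G, CtxInstC G → V i G)
    (H2 : ∀ i, Valid_conc i ↔ ∀ G', CtxInstC' G' → V i G')
    (H3 : ∀ G', CtxInstC' G' → wf G' →
      ∃ G, CtxInstC G ∧ ∀ i, (V i G ↔ V i G'))
    (H4 : ∀ i G', CtxInstC' G' → ¬ wf G' → V i G') :
    (∀ i, Valid_prem i) → ∀ i, Valid_conc i := by
  intro hp i
  rw [H2]
  intro G' hG'
  by_cases hw : wf G'
  · obtain ⟨G, hG, heq⟩ := H3 G' hG' hw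
    exact (heq i).mp ((H1 i).mp (hp i) G hG)
  · exact H4 i G' hG' hw
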